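/- Let I ⊆ ℝ be an open interval, k ∈ {−1, 1}, and ξ : I → ℝ a three times differentiable function with ξ > 0 and k·ξ̈ < 0 on I. Define φ := √(−k·ξ³·ξ̈) and v := ξ⁴/φ³. Then for all constants c₁, c₂ ∈ ℝ, the function α(t) := (c₁ + c₂t)/ξ(t) satisfies the T-model field equation 2vφα̈ + (v̇φ + 3vφ̇)α̇ − 2kα = 0 on I; conversely, every twice differentiable solution α of this equation on I is of the form α(t) = (c₁ + c₂t)/ξ(t) for some constants c₁, c₂ ∈ ℝ. -/

import Mathlib

noncomputable section

/-- The metric function `φ = √(−kξ³ξ̈)` of the ξ-algorithm. -/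
def xiPhi (k : ℝ) (ξ : ℝ → ℝ) : ℝ → ℝ :=
  fun t => Real.sqrt (-(k * ξ t ^ 3 * deriv (deriv ξ) t))

/-- The metric function `v = ξ⁴/φ³` of the ξ-algorithm. -/
def xiV (k : ℝ) (ξ : ℝ → ℝ) : ℝ → ℝ :=
  fun t => ξ t ^ 4 / xiPhi k ξ t ^ 3

/-- The T-model field equation `2vφα̈ + (v̇φ + 3vφ̇)α̇ − 2kα = 0` at the point `t`. -/
def TModelFieldEq (k : ℝ) (v φ α : ℝ → ℝ) (t : ℝ) : Prop :=
  2 * v t * φ t * deriv (deriv α) t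
    + (deriv v t * φ t + 3 * v t * deriv φ t) * deriv α t - 2 * k * α t = 0

/-!
Since `φ² = −kξ³ξ̈` and `vφ³ = ξ⁴`, the coefficients of the field equation are
`2vφ = −2kξ/ξ̈` and `v̇φ + 3vφ̇ = (vφ³)˙/φ² = −4kξ̇/ξ̈`. Hence the equation reads
`−(2k/ξ̈)·(ξα)¨ = 0`, and its solutions on an interval are exactly the `α` with `ξα` affine.
-/

open Filter Topology

section Calculus

variable {𝕜 : Type*} [NontriviallyNormedField 𝕜] {f g : 𝕜 → 𝕜} {s : Set 𝕜} {x : 𝕜}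

theorem hasDerivAt_deriv_mul (hf : ∀ᶠ y in 𝓝 x, DifferentiableAt 𝕜 f y)
    (hg : ∀ᶠ y in 𝓝 x, DifferentiableAt 𝕜 g y) (hf' : DifferentiableAt 𝕜 (deriv f) x)
    (hg' : DifferentiableAt 𝕜 (deriv g) x) :
    HasDerivAt (deriv fun y => f y * g y)
      (deriv (deriv f) x * g x + 2 * deriv f x * deriv g x + f x * deriv (deriv g) x) x := by
  have hprod : (deriv fun y => f y * g y) =ᶠ[𝓝 x] fun y => deriv f y * g y + f y * deriv g y :=
    (hf.and hg).mono fun y ⟨hfy, hgy⟩ => deriv_fun_mul hfy hgy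
  refine HasDerivAt.congr_of_eventuallyEq ?_ hprod
  convert (hf'.hasDerivAt.mul hg.self_of_nhds.hasDerivAt).add
    (hf.self_of_nhds.hasDerivAt.mul hg'.hasDerivAt) using 1
  · rfl
  · ring

theorem ContDiffOn.differentiableAt_deriv (hf : ContDiffOn 𝕜 2 f s) (hs : IsOpen s)
    (hx : x ∈ s) : DifferentiableAt 𝕜 (deriv f) x :=
  ((hf.deriv_of_isOpen hs (m := 1) (by norm_num)).differentiableOn one_ne_zero).differentiableAt
    (hs.mem_nhds hx)

theorem contDiffOn_two_of_continuousOn_deriv_deriv (hs : IsOpen s) (hf : DifferentiableOn 𝕜 f s)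
    (hf' : DifferentiableOn 𝕜 (deriv f) s) (hf'' : ContinuousOn (deriv (deriv f)) s) :
    ContDiffOn 𝕜 2 f s := by
  rw [show (2 : WithTop ℕ∞) = 1 + 1 from rfl, contDiffOn_succ_iff_deriv_of_isOpen hs,
    show (1 : WithTop ℕ∞) = 0 + 1 from rfl, contDiffOn_succ_iff_deriv_of_isOpen hs]
  exact ⟨hf, by simp, hf', by simp, contDiffOn_zero.mpr hf''⟩

theorem deriv_div_pow_succ_mul_add (n : ℕ) (hf : DifferentiableAt 𝕜 f x)
    (hg : DifferentiableAt 𝕜 g x) (hg0 : g x ≠ 0) :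
    deriv (fun y => f y / g y ^ (n + 1)) x * g x + (n + 1) * (f x / g x ^ (n + 1)) * deriv g x
      = deriv f x / g x ^ n := by
  rw [deriv_fun_div (d := fun y => g y ^ (n + 1)) hf (hg.pow _) (pow_ne_zero _ hg0),
    deriv_fun_pow hg]
  field_simp
  push_cast
  ring

end Calculus

section MeanValue

variable {𝕜 : Type*} [RCLike 𝕜] {f : 𝕜 → 𝕜} {s : Set 𝕜}

theorem IsOpen.exists_affine_of_hasDerivAt_deriv_zero (hs : IsOpen s) (hs' : IsPreconnected s)
    (hf : DifferentiableOn 𝕜 f s) (hf'' : ∀ x ∈ s, HasDerivAt (deriv f) 0 x) :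
    ∃ a b : 𝕜, ∀ x ∈ s, f x = a + b * x := by
  obtain ⟨b, hb⟩ := hs.exists_is_const_of_deriv_eq_zero hs'
    (fun x hx => (hf'' x hx).differentiableAt.differentiableWithinAt)
    (fun x hx => (hf'' x hx).deriv)
  obtain ⟨a, ha⟩ := hs.exists_eq_add_of_deriv_eq hs' hf (g := fun x => b * x)
    (differentiableOn_id.const_mul b) (fun x hx => by simp [hb x hx])
  exact ⟨a, b, fun x hx => by rw [ha hx]; ring⟩

end MeanValue

theorem tModelFieldEq_xi_iff {k : ℝ} (hk : k * k = 1) {ξ α : ℝ → ℝ} {t : ℝ}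
    (hξ : DifferentiableAt ℝ ξ t) (hξ'' : DifferentiableAt ℝ (deriv (deriv ξ)) t)
    (hξpos : 0 < ξ t) (hkξ'' : k * deriv (deriv ξ) t < 0) :
    TModelFieldEq k (xiV k ξ) (xiPhi k ξ) α t ↔
      deriv (deriv ξ) t * α t + 2 * deriv ξ t * deriv α t + ξ t * deriv (deriv α) t = 0 := by
  have hrad : 0 < -(k * ξ t ^ 3 * deriv (deriv ξ) t) := by nlinarith [pow_pos hξpos 3]
  have hφ : DifferentiableAt ℝ (xiPhi k ξ) t :=
    ((((differentiableAt_const k).mul (hξ.pow 3)).mul hξ'').neg).sqrt hrad.ne'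
  have hφsq : xiPhi k ξ t ^ 2 = -(k * ξ t ^ 3 * deriv (deriv ξ) t) := Real.sq_sqrt hrad.le
  have hφ0 : xiPhi k ξ t ≠ 0 := (Real.sqrt_pos.mpr hrad).ne'
  have hk0 : k ≠ 0 := by rintro rfl; simp at hk
  have hξ''0 : deriv (deriv ξ) t ≠ 0 := by rintro h; simp [h] at hkξ''
  have hcoeff₂ : 2 * xiV k ξ t * xiPhi k ξ t = -2 * k * ξ t / deriv (deriv ξ) t := by
    rw [xiV]
    field_simp
    linear_combination k * hφsq - ξ t ^ 3 * deriv (deriv ξ) t * hk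
  have hcoeff₁ : deriv (xiV k ξ) t * xiPhi k ξ t + 3 * xiV k ξ t * deriv (xiPhi k ξ) t
      = -4 * k * deriv ξ t / deriv (deriv ξ) t := by
    have h := deriv_div_pow_succ_mul_add 2 (hξ.fun_pow 4) hφ hφ0
    norm_num only at h
    unfold xiV
    rw [h, deriv_fun_pow hξ, hφsq]
    field_simp
    linear_combination 4 * deriv ξ t * ξ t ^ 3 * hk
  have hfactor : ∀ a b c : ℝ, -2 * k * ξ t / deriv (deriv ξ) t * a
      + -4 * k * deriv ξ t / deriv (deriv ξ) t * b - 2 * k * c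
      = -2 * k / deriv (deriv ξ) t * (deriv (deriv ξ) t * c + 2 * deriv ξ t * b + ξ t * a) := by
    intro a b c
    field_simp
    ring
  rw [TModelFieldEq, hcoeff₂, hcoeff₁, hfactor]
  simp [hk0, hξ''0]

theorem xi_algorithm
    (I : Set ℝ) (hIopen : IsOpen I) (hIconn : I.OrdConnected)
    (k : ℝ) (hk : k = -1 ∨ k = 1)
    (ξ : ℝ → ℝ)
    (hξ : ∀ t ∈ I, DifferentiableAt ℝ ξ t ∧ DifferentiableAt ℝ (deriv ξ) t ∧
      DifferentiableAt ℝ (deriv (deriv ξ)) t)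
    (hξpos : ∀ t ∈ I, 0 < ξ t)
    (hξ'' : ∀ t ∈ I, k * deriv (deriv ξ) t < 0) :
    (∀ c₁ c₂ : ℝ, ∀ t ∈ I,
      TModelFieldEq k (xiV k ξ) (xiPhi k ξ) (fun u => (c₁ + c₂ * u) / ξ u) t)
    ∧ (∀ α : ℝ → ℝ,
        (∀ t ∈ I, DifferentiableAt ℝ α t ∧ DifferentiableAt ℝ (deriv α) t) →
        (∀ t ∈ I, TModelFieldEq k (xiV k ξ) (xiPhi k ξ) α t) →
        ∃ c₁ c₂ : ℝ, ∀ t ∈ I, α t = (c₁ + c₂ * t) / ξ t) := by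
  have hk1 : k * k = 1 := by rcases hk with rfl | rfl <;> norm_num
  have hreduce : ∀ α : ℝ → ℝ,
      (∀ t ∈ I, DifferentiableAt ℝ α t ∧ DifferentiableAt ℝ (deriv α) t) →
      ∀ t ∈ I, TModelFieldEq k (xiV k ξ) (xiPhi k ξ) α t ↔
        HasDerivAt (deriv fun s => ξ s * α s) 0 t := by
    intro α hα t ht
    have hleibniz := hasDerivAt_deriv_mul
      (eventually_of_mem (hIopen.mem_nhds ht) fun u hu => (hξ u hu).1)
      (eventually_of_mem (hIopen.mem_nhds ht) fun u hu => (hα u hu).1) (hξ t ht).2.1 (hα t ht).2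
    rw [tModelFieldEq_xi_iff hk1 (hξ t ht).1 (hξ t ht).2.2 (hξpos t ht) (hξ'' t ht)]
    exact ⟨fun h => h ▸ hleibniz, hleibniz.unique⟩
  refine ⟨fun c₁ c₂ t ht => ?_, fun α hα hsol => ?_⟩
  · have hξC2 : ContDiffOn ℝ 2 ξ I := contDiffOn_two_of_continuousOn_deriv_deriv hIopen
      (fun u hu => (hξ u hu).1.differentiableWithinAt)
      (fun u hu => (hξ u hu).2.1.differentiableWithinAt)
      (fun u hu => (hξ u hu).2.2.continuousAt.continuousWithinAt)
    have hαC2 : ContDiffOn ℝ 2 (fun u => (c₁ + c₂ * u) / ξ u) I :=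
      (contDiff_const.add (contDiff_const.mul contDiff_id)).contDiffOn.div hξC2
        fun u hu => (hξpos u hu).ne'
    rw [hreduce _ (fun u hu => ⟨(hαC2.differentiableOn two_ne_zero).differentiableAt
      (hIopen.mem_nhds hu), hαC2.differentiableAt_deriv hIopen hu⟩) t ht]
    have hprod : (fun s => ξ s * ((c₁ + c₂ * s) / ξ s)) =ᶠ[𝓝 t] fun s => c₁ + c₂ * s :=
      eventually_of_mem (hIopen.mem_nhds ht) fun u hu => mul_div_cancel₀ _ (hξpos u hu).ne'
    refine (hasDerivAt_const t c₂).congr_of_eventuallyEq (hprod.deriv.trans ?_)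
    exact Eventually.of_forall fun u => by simp
  · obtain ⟨c₁, c₂, hc⟩ := hIopen.exists_affine_of_hasDerivAt_deriv_zero hIconn.isPreconnected
      (fun u hu => ((hξ u hu).1.mul (hα u hu).1).differentiableWithinAt)
      fun u hu => (hreduce α hα u hu).1 (hsol u hu)
    exact ⟨c₁, c₂, fun u hu =>
      eq_div_of_mul_eq (hξpos u hu).ne' ((mul_comm _ _).trans (hc u hu))⟩
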